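/- For every t ≥ 0 there exist n > t and a_1,…,a_m, b_1,…,b_m ∈ {0,1,2}^n with m = 3^t, such that dist(a_i,b_i) ≥ t+1 for all i ∈ [m] and dist(a_i,b_j) + dist(a_j,b_i) ≤ 2t for all distinct i,j ∈ [m]. -/
import Mathlib

open Finset

private lemma hd_eq_sum {n : ℕ} (x y : Fin n → Fin 3) :
    hammingDist x y = ∑ k, if x k ≠ y k then 1 else 0 := by
  simp [hammingDist, Finset.card_filter]

theorem stmt_9 (t : ℕ) :
    ∃ n : ℕ, t < n ∧
      ∃ a b : Fin (3 ^ t) → (Fin n → Fin 3),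
        (∀ i, t + 1 ≤ hammingDist (a i) (b i)) ∧
        (∀ i j, i ≠ j →
          hammingDist (a i) (b j) + hammingDist (a j) (b i) ≤ 2 * t) := by
  refine ⟨t + 1, Nat.lt_succ_self t, ?_⟩
  set e := (finFunctionFinEquiv (m := 3) (n := t)).symm with he
  set g : Fin (3 ^ t) → (Fin t → Fin 3) := fun i => e i with hg
  set a : Fin (3 ^ t) → (Fin (t + 1) → Fin 3) :=
    fun i => Fin.snoc (g i) (-(∑ k, g i k)) with ha
  set b : Fin (3 ^ t) → (Fin (t + 1) → Fin 3) := fun i k => a i k + 1 with hb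
  refine ⟨a, b, ?_, ?_⟩
  · intro i
    have h1 : ∀ x : Fin 3, x ≠ x + 1 := by decide
    rw [hd_eq_sum]
    have hcoe : ∀ k : Fin (t + 1), (if a i k ≠ b i k then 1 else 0) = 1 := by
      intro k; simp [hb, h1 (a i k)]
    simp only [hcoe, Finset.sum_const, Finset.card_univ, Fintype.card_fin, smul_eq_mul, mul_one]
    exact le_rfl
  · intro i j hij
    have hsum : ∀ i, ∑ k, a i k = 0 := by
      intro i
      rw [ha]
      simp [Fin.sum_univ_castSucc]
    have hdist2 : 2 ≤ hammingDist (a i) (a j) := by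
      have hdz : ∑ k, (a i k - a j k) = 0 := by
        rw [Finset.sum_sub_distrib, hsum, hsum]
        exact sub_self 0
      set S := Finset.univ.filter (fun k => a i k ≠ a j k) with hS
      have hSsum : ∑ k ∈ S, (a i k - a j k) = 0 := by
        rw [hS, Finset.sum_filter_of_ne, hdz]
        intro k _ hk
        exact sub_ne_zero.mp hk
      have hdd : hammingDist (a i) (a j) = S.card := rfl
      rw [hdd]
      by_contra h
      push_neg at h
      interval_cases hc : S.card
      · have hSe : S = ∅ := Finset.card_eq_zero.mp hc
        have hae : ∀ k, a i k = a j k := by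
          intro k
          by_contra hk
          have hmem : k ∈ S := Finset.mem_filter.mpr ⟨Finset.mem_univ k, hk⟩
          rw [hSe] at hmem
          exact absurd hmem (Finset.notMem_empty k)
        have hge : g i = g j := by
          funext k
          have hkk := hae (Fin.castSucc k)
          simpa [ha, Fin.snoc_castSucc] using hkk
        have hee : e i = e j := hge
        exact hij (e.injective hee)
      · obtain ⟨k0, hk0⟩ := Finset.card_eq_one.mp hc
        have hk0mem : k0 ∈ S := by simp [hk0]
        have hne : a i k0 - a j k0 ≠ 0 := by
          rw [hS, Finset.mem_filter] at hk0mem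
          exact sub_ne_zero.mpr hk0mem.2
        rw [hk0, Finset.sum_singleton] at hSsum
        exact hne hSsum
    have key : ∀ x y : Fin 3,
        ((if x ≠ y + 1 then 1 else 0) + (if y ≠ x + 1 then 1 else 0))
          + (if x ≠ y then 1 else 0) ≤ 2 := by decide
    have hbound : (hammingDist (a i) (b j) + hammingDist (a j) (b i))
        + hammingDist (a i) (a j) ≤ 2 * (t + 1) := by
      simp only [hd_eq_sum, ← Finset.sum_add_distrib]
      calc ∑ k, (((if a i k ≠ b j k then 1 else 0)
              + (if a j k ≠ b i k then 1 else 0))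
              + (if a i k ≠ a j k then 1 else 0))
          ≤ ∑ _k : Fin (t + 1), 2 :=
            Finset.sum_le_sum (fun k _ => by
              have := key (a i k) (a j k)
              simpa [hb] using this)
        _ = 2 * (t + 1) := by simp [mul_comm]
    omega
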